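/- Proximal operator of the scaled graph norm as residual of a projection: if f(v) = c·||v||_{G,τ} with c > 0, then for any x ∈ R^p, Prox_f(x) = x − Π_{S_O}(x), where O = { i ∈ [p] : ||x_{N_i}||_2 > c τ_i }, S_O = { u ∈ R^p : ||u_{N_i}||_2 ≤ c τ_i for each i ∈ O }, and Π_{S_O} is the Euclidean projection onto the closed convex set S_O. -/

import Mathlib

open scoped BigOperators

/-- Euclidean (ℓ2) norm of a finitely indexed real vector. -/
noncomputable def l2norm {m : Type*} [Fintype m] (v : m → ℝ) : ℝ :=
  Real.sqrt (∑ i, v i ^ 2)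

/-- ℓ2 norm of the subvector of `v` indexed by the finite set `B`. -/
noncomputable def l2normOn {m : Type*} [Fintype m] (B : Finset m) (v : m → ℝ) : ℝ :=
  Real.sqrt (∑ j ∈ B, v j ^ 2)

/-- The graph-induced norm `‖β‖_{G,τ}`, defined as the infimum of
`∑ i, τ i * ‖V i‖₂` over all decompositions `∑ i, V i = β` with
`supp (V i) ⊆ N i`. -/
noncomputable def graphNorm (p : ℕ) (N : Fin p → Finset (Fin p)) (τ : Fin p → ℝ)
    (β : Fin p → ℝ) : ℝ :=
  sInf { s | ∃ V : Fin p → Fin p → ℝ,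
    (∀ j, (∑ i, V i j) = β j) ∧ (∀ i, ∀ j, j ∉ N i → V i j = 0) ∧
    s = ∑ i, τ i * l2norm (V i) }

section l2
variable {m : Type*} [Fintype m]

lemma l2norm_nonneg (v : m → ℝ) : 0 ≤ l2norm v := Real.sqrt_nonneg _
lemma l2normOn_nonneg (B : Finset m) (v : m → ℝ) : 0 ≤ l2normOn B v := Real.sqrt_nonneg _

lemma l2normOn_sq (B : Finset m) (v : m → ℝ) :
    l2normOn B v ^ 2 = ∑ j ∈ B, v j ^ 2 :=
  Real.sq_sqrt (Finset.sum_nonneg fun _ _ => sq_nonneg _)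

lemma l2norm_eq (v : m → ℝ) : l2norm v = l2normOn (Finset.univ) v := rfl

lemma l2normOn_add_le (B : Finset m) (a b : m → ℝ) :
    l2normOn B (fun j => a j + b j) ≤ l2normOn B a + l2normOn B b := by
  have h0 : 0 ≤ l2normOn B a + l2normOn B b :=
    add_nonneg (l2normOn_nonneg _ _) (l2normOn_nonneg _ _)
  rw [l2normOn, show (l2normOn B a + l2normOn B b) = Real.sqrt ((l2normOn B a + l2normOn B b)^2) by
        rw [Real.sqrt_sq h0]]
  apply Real.sqrt_le_sqrt
  have hcs := Real.sum_mul_le_sqrt_mul_sqrt B a b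
  have ha := l2normOn_sq B a
  have hb := l2normOn_sq B b
  have hcs' : ∑ j ∈ B, a j * b j ≤ l2normOn B a * l2normOn B b := hcs
  have hsplit : ∑ j ∈ B, (a j + b j)^2
      = (∑ j ∈ B, a j ^2) + 2 * (∑ j ∈ B, a j * b j) + ∑ j ∈ B, b j ^2 := by
    rw [show (fun j => (a j + b j)^2) = fun j => a j^2 + 2*(a j * b j) + b j^2 by funext j; ring]
    rw [Finset.sum_add_distrib, Finset.sum_add_distrib, ← Finset.mul_sum]
  rw [hsplit]
  nlinarith [hcs', ha, hb, l2normOn_nonneg B a, l2normOn_nonneg B b]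

lemma l2norm_add_le (a b : m → ℝ) :
    l2norm (fun j => a j + b j) ≤ l2norm a + l2norm b := l2normOn_add_le _ a b

lemma l2normOn_smul (B : Finset m) (t : ℝ) (ht : 0 ≤ t) (a : m → ℝ) :
    l2normOn B (fun j => t * a j) = t * l2normOn B a := by
  have h : ∑ j ∈ B, (t * a j)^2 = t^2 * ∑ j ∈ B, a j ^2 := by
    rw [Finset.mul_sum]; congr 1; funext j; ring
  rw [l2normOn, h, Real.sqrt_mul (sq_nonneg t), Real.sqrt_sq ht, l2normOn]

lemma l2norm_smul (t : ℝ) (ht : 0 ≤ t) (a : m → ℝ) :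
    l2norm (fun j => t * a j) = t * l2norm a := l2normOn_smul _ t ht a

lemma l2normOn_mono_sq (B : Finset m) {a b : m → ℝ} (h : ∀ j, a j ^2 ≤ b j ^2) :
    l2normOn B a ≤ l2normOn B b :=
  Real.sqrt_le_sqrt (Finset.sum_le_sum fun j _ => h j)

lemma l2normOn_le_l2norm (B : Finset m) (a : m → ℝ) : l2normOn B a ≤ l2norm a :=
  Real.sqrt_le_sqrt (Finset.sum_le_sum_of_subset_of_nonneg (Finset.subset_univ B)
    (fun j _ _ => sq_nonneg _))

lemma cauchy_on (B : Finset m) (a b : m → ℝ) :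
    ∑ j ∈ B, a j * b j ≤ l2normOn B a * l2normOn B b :=
  Real.sum_mul_le_sqrt_mul_sqrt B a b

end l2

/-- limit lemma -/
lemma le_of_forall_small {a b k : ℝ} (h : ∀ t : ℝ, 0 < t → t ≤ 1 → a ≤ b + t * k) : a ≤ b := by
  by_contra hab
  push_neg at hab
  have hk : 0 < k := by
    by_contra hk
    push_neg at hk
    have := h 1 one_pos le_rfl
    nlinarith
  have ht0 : 0 < (a - b) / (2 * k) := div_pos (by linarith) (by positivity)
  set t := min 1 ((a - b) / (2 * k)) with htdef
  have h1 : 0 < t := lt_min one_pos ht0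
  have h2 : t ≤ 1 := min_le_left _ _
  have h3 : t ≤ (a - b) / (2 * k) := min_le_right _ _
  have hk0 : k ≠ 0 := hk.ne'
  have h4 : t * k ≤ (a - b) / 2 := by
    calc t * k ≤ (a-b)/(2*k) * k := mul_le_mul_of_nonneg_right h3 hk.le
    _ = (a-b)/2 := by field_simp
  nlinarith [h t h1 h2]

section gn
variable {p : ℕ} {N : Fin p → Finset (Fin p)} {τ : Fin p → ℝ}

def decompSet (p : ℕ) (N : Fin p → Finset (Fin p)) (τ : Fin p → ℝ) (β : Fin p → ℝ) : Set ℝ :=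
  { s | ∃ V : Fin p → Fin p → ℝ,
    (∀ j, (∑ i, V i j) = β j) ∧ (∀ i, ∀ j, j ∉ N i → V i j = 0) ∧
    s = ∑ i, τ i * l2norm (V i) }

lemma graphNorm_def (β : Fin p → ℝ) : graphNorm p N τ β = sInf (decompSet p N τ β) := rfl

lemma decomp_nonneg (hτ : ∀ i, 0 < τ i) {β : Fin p → ℝ} {s : ℝ} (hs : s ∈ decompSet p N τ β) :
    0 ≤ s := by
  obtain ⟨V, -, -, rfl⟩ := hs
  exact Finset.sum_nonneg fun i _ => mul_nonneg (hτ i).le (l2norm_nonneg _)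

lemma decomp_bddBelow (hτ : ∀ i, 0 < τ i) (β : Fin p → ℝ) : BddBelow (decompSet p N τ β) :=
  ⟨0, fun s hs => decomp_nonneg hτ hs⟩

lemma decomp_nonempty (hN : ∀ i, i ∈ N i) (β : Fin p → ℝ) :
    (decompSet p N τ β).Nonempty := by
  refine ⟨_, fun i j => if i = j then β j else 0, fun j => ?_, fun i j hj => ?_, rfl⟩
  · simp
  · simp only [ite_eq_right_iff]
    intro h; subst h; exact absurd (hN i) hj

lemma gn_nonneg (hτ : ∀ i, 0 < τ i) (hN : ∀ i, i ∈ N i) (β : Fin p → ℝ) :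
    0 ≤ graphNorm p N τ β :=
  le_csInf (decomp_nonempty hN β) (fun s hs => decomp_nonneg hτ hs)

lemma gn_le (hτ : ∀ i, 0 < τ i) {β : Fin p → ℝ} {s : ℝ} (hs : s ∈ decompSet p N τ β) :
    graphNorm p N τ β ≤ s :=
  csInf_le (decomp_bddBelow hτ β) hs

lemma gn_exists (hτ : ∀ i, 0 < τ i) (hN : ∀ i, i ∈ N i) (β : Fin p → ℝ) {ε : ℝ} (hε : 0 < ε) :
    ∃ s ∈ decompSet p N τ β, s < graphNorm p N τ β + ε := by
  apply exists_lt_of_csInf_lt (decomp_nonempty hN β)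
  rw [graphNorm_def]; linarith

lemma gn_zero (hτ : ∀ i, 0 < τ i) (hN : ∀ i, i ∈ N i) :
    graphNorm p N τ (fun _ => (0:ℝ)) = 0 := by
  refine le_antisymm (gn_le hτ ⟨fun _ _ => 0, by simp, by simp, ?_⟩) (gn_nonneg hτ hN _)
  simp [l2norm]

lemma gn_subadd (hτ : ∀ i, 0 < τ i) (hN : ∀ i, i ∈ N i) (a b : Fin p → ℝ) :
    graphNorm p N τ (fun j => a j + b j) ≤ graphNorm p N τ a + graphNorm p N τ b := by
  refine le_of_forall_small (k := 1) fun t ht ht1 => ?_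
  obtain ⟨s, ⟨V, hV1, hV2, rfl⟩, hs⟩ := gn_exists hτ hN a (half_pos ht)
  obtain ⟨r, ⟨W, hW1, hW2, rfl⟩, hr⟩ := gn_exists hτ hN b (half_pos ht)
  have hmem : (∑ i, τ i * l2norm (fun j => V i j + W i j)) ∈
      decompSet p N τ (fun j => a j + b j) := by
    refine ⟨fun i j => V i j + W i j, fun j => ?_, fun i j hj => by dsimp only; rw [hV2 i j hj, hW2 i j hj]; ring, rfl⟩
    rw [Finset.sum_add_distrib, hV1 j, hW1 j]
  calc graphNorm p N τ (fun j => a j + b j) ≤ ∑ i, τ i * l2norm (fun j => V i j + W i j) :=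
        gn_le hτ hmem
    _ ≤ ∑ i, (τ i * l2norm (V i) + τ i * l2norm (W i)) := by
        refine Finset.sum_le_sum fun i _ => ?_
        rw [← mul_add]
        exact mul_le_mul_of_nonneg_left (l2norm_add_le (V i) (W i)) (hτ i).le
    _ = (∑ i, τ i * l2norm (V i)) + ∑ i, τ i * l2norm (W i) := Finset.sum_add_distrib
    _ ≤ graphNorm p N τ a + graphNorm p N τ b + t * 1 := by linarith

lemma gn_smul_le (hτ : ∀ i, 0 < τ i) (hN : ∀ i, i ∈ N i) {t : ℝ} (ht : 0 ≤ t) (a : Fin p → ℝ) :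
    graphNorm p N τ (fun j => t * a j) ≤ t * graphNorm p N τ a := by
  refine le_of_forall_small (k := 1 + t) fun ε hε hε1 => ?_
  obtain ⟨s, ⟨V, hV1, hV2, rfl⟩, hs⟩ := gn_exists hτ hN a hε
  have hmem : (∑ i, τ i * l2norm (fun j => t * V i j)) ∈ decompSet p N τ (fun j => t * a j) := by
    refine ⟨fun i j => t * V i j, fun j => ?_, fun i j hj => by dsimp only; rw [hV2 i j hj, mul_zero], rfl⟩
    rw [← Finset.mul_sum, hV1 j]
  calc graphNorm p N τ (fun j => t * a j) ≤ ∑ i, τ i * l2norm (fun j => t * V i j) :=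
        gn_le hτ hmem
    _ = t * ∑ i, τ i * l2norm (V i) := by
        rw [Finset.mul_sum]; congr 1; funext i; rw [l2norm_smul t ht]; ring
    _ ≤ t * (graphNorm p N τ a + ε) := mul_le_mul_of_nonneg_left hs.le ht
    _ ≤ t * graphNorm p N τ a + ε * (1 + t) := by nlinarith

/-- single-group bound -/
lemma gn_single (hτ : ∀ i, 0 < τ i) (i : Fin p) (w : Fin p → ℝ)
    (hw : ∀ j, j ∉ N i → w j = 0) : graphNorm p N τ w ≤ τ i * l2norm w := by
  refine gn_le hτ ⟨fun k j => if k = i then w j else 0, fun j => ?_, fun k j hj => ?_, ?_⟩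
  · simp
  · simp only [ite_eq_right_iff]; intro h; subst h; exact hw j hj
  · rw [Finset.sum_eq_single i]
    · simp
    · intro k _ hk
      simp [hk, l2norm]
    · simp

/-- dual lower bound: if ‖u‖ on each group is ≤ c·τᵢ then ⟨u,v⟩ ≤ c·‖v‖_G -/
lemma gn_dual_lower (hτ : ∀ i, 0 < τ i) (hN : ∀ i, i ∈ N i) {c : ℝ} (hc : 0 < c)
    {u : Fin p → ℝ} (hu : ∀ i, l2normOn (N i) u ≤ c * τ i) (v : Fin p → ℝ) :
    ∑ j, u j * v j ≤ c * graphNorm p N τ v := by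
  rw [graphNorm_def, mul_comm, ← div_le_iff₀ hc]
  refine le_csInf (decomp_nonempty hN v) ?_
  rintro s ⟨V, hV1, hV2, rfl⟩
  rw [div_le_iff₀ hc, mul_comm]
  have key : ∀ i, ∑ j, u j * V i j ≤ c * τ i * l2norm (V i) := by
    intro i
    have h1 : ∑ j, u j * V i j = ∑ j ∈ N i, u j * V i j := by
      rw [← Finset.sum_subset (Finset.subset_univ (N i))]
      intro j _ hj
      rw [hV2 i j hj, mul_zero]
    rw [h1]
    calc ∑ j ∈ N i, u j * V i j ≤ l2normOn (N i) u * l2normOn (N i) (V i) := cauchy_on _ _ _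
      _ ≤ (c * τ i) * l2norm (V i) := by
          exact mul_le_mul (hu i) (l2normOn_le_l2norm _ _) (l2normOn_nonneg _ _)
            (mul_nonneg hc.le (hτ i).le)
  calc ∑ j, u j * v j = ∑ j, ∑ i, u j * V i j := by
        congr 1; funext j; rw [← Finset.mul_sum, hV1 j]
    _ = ∑ i, ∑ j, u j * V i j := Finset.sum_comm
    _ ≤ ∑ i, c * τ i * l2norm (V i) := Finset.sum_le_sum fun i _ => key i
    _ = c * ∑ i, τ i * l2norm (V i) := by rw [Finset.mul_sum]; congr 1; funext i; ring

/-- Lipschitz-type bound -/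
lemma gn_sub_le (hτ : ∀ i, 0 < τ i) (hN : ∀ i, i ∈ N i) (a b : Fin p → ℝ) :
    graphNorm p N τ a ≤ graphNorm p N τ b + ∑ i, τ i * |a i - b i| := by
  have h1 : graphNorm p N τ (fun j => a j - b j) ≤ ∑ i, τ i * |a i - b i| := by
    have := gn_le (N := N) hτ (β := fun j => a j - b j)
      (s := ∑ i, τ i * l2norm (fun j => if i = j then a j - b j else 0))
      ⟨fun i j => if i = j then a j - b j else 0, by simp, ?_, rfl⟩
    · refine this.trans (le_of_eq ?_)
      congr 1; funext i
      congr 1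
      rw [l2norm, Finset.sum_eq_single i (by intro k _ hk; simp [Ne.symm hk]) (by simp)]
      simp [Real.sqrt_sq_eq_abs]
    · intro i j hj
      simp only [ite_eq_right_iff]
      intro h; subst h; exact absurd (hN i) hj
  have h2 := gn_subadd hτ hN b (fun j => a j - b j)
  have h3 : (fun j => b j + (fun j => a j - b j) j) = a := by funext j; simp
  rw [h3] at h2
  linarith
end gn

section clamp
variable {a b : ℝ}

/-- clamp b to [min a 0, max a 0] -/
noncomputable def clmp (a b : ℝ) : ℝ := max (min a 0) (min b (max a 0))

lemma clmp_sq_le_left : clmp a b ^ 2 ≤ b ^ 2 := by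
  unfold clmp
  rcases le_total a 0 with h | h <;> rcases le_total b 0 with h' | h' <;>
    rcases le_total b a with h'' | h'' <;>
    simp [max_def, min_def] <;> split_ifs <;> nlinarith

lemma clmp_dist_le : (a - clmp a b) ^ 2 ≤ (a - b) ^ 2 := by
  unfold clmp
  rcases le_total a 0 with h | h <;> rcases le_total b 0 with h' | h' <;>
    rcases le_total b a with h'' | h'' <;>
    simp [max_def, min_def] <;> split_ifs <;> nlinarith

lemma clmp_dist_eq (h : (a - clmp a b) ^ 2 = (a - b) ^ 2) : b ^ 2 ≤ a ^ 2 := by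
  unfold clmp at h
  rcases le_total a 0 with h1 | h1 <;> rcases le_total b 0 with h' | h' <;>
    rcases le_total b a with h'' | h'' <;>
    simp [max_def, min_def] at h <;> split_ifs at h <;> nlinarith

end clamp

/-- variational inequality from minimality along a segment -/
lemma vi_of_min {p : ℕ} {y d : Fin p → ℝ}
    (h : ∀ t : ℝ, 0 < t → t ≤ 1 → ∑ j, y j ^ 2 ≤ ∑ j, (y j - t * d j) ^ 2) :
    ∑ j, y j * d j ≤ 0 := by
  have key : ∀ t : ℝ, 0 < t → t ≤ 1 →
      2 * ∑ j, y j * d j ≤ 0 + t * ∑ j, d j ^ 2 := by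
    intro t ht ht1
    have hexp : ∑ j, (y j - t * d j) ^ 2
        = ∑ j, y j ^ 2 - 2 * t * ∑ j, y j * d j + t ^ 2 * ∑ j, d j ^ 2 := by
      rw [show (fun j => (y j - t * d j)^2) = fun j => y j^2 - 2*t*(y j * d j) + t^2 * d j^2 by
        funext j; ring]
      rw [Finset.sum_add_distrib, Finset.sum_sub_distrib, ← Finset.mul_sum, ← Finset.mul_sum]
    have := h t ht ht1
    rw [hexp] at this
    have h2 : 2 * t * ∑ j, y j * d j ≤ t ^ 2 * ∑ j, d j ^ 2 := by linarith
    nlinarith [h2, ht, mul_pos ht ht]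
  linarith [le_of_forall_small key]

section mini
variable {p : ℕ} {N : Fin p → Finset (Fin p)} {τ : Fin p → ℝ}

lemma gn_continuous (hτ : ∀ i, 0 < τ i) (hN : ∀ i, i ∈ N i) :
    Continuous (graphNorm p N τ) := by
  have hbound : ∀ a b : Fin p → ℝ,
      dist (graphNorm p N τ a) (graphNorm p N τ b) ≤ (∑ i, τ i) * dist a b := by
    intro a b
    have key : ∀ a b : Fin p → ℝ,
        graphNorm p N τ a - graphNorm p N τ b ≤ (∑ i, τ i) * dist a b := by
      intro a b
      have h1 := gn_sub_le hτ hN a b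
      have h2 : ∑ i, τ i * |a i - b i| ≤ (∑ i, τ i) * dist a b := by
        rw [Finset.sum_mul]
        refine Finset.sum_le_sum fun i _ => ?_
        refine mul_le_mul_of_nonneg_left ?_ (hτ i).le
        rw [← Real.dist_eq]
        exact dist_le_pi_dist a b i
      linarith
    rw [Real.dist_eq, abs_sub_le_iff]
    constructor
    · exact key a b
    · rw [dist_comm]; exact key b a
  exact (LipschitzWith.of_dist_le_mul (K := (∑ i, τ i).toNNReal) (by
    intro a b
    refine (hbound a b).trans ?_
    gcongr
    exact Real.le_coe_toNNReal _)).continuous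

lemma exists_global_min (hτ : ∀ i, 0 < τ i) (hN : ∀ i, i ∈ N i) {c : ℝ} (hc : 0 < c)
    (x : Fin p → ℝ) :
    ∃ z : Fin p → ℝ, ∀ v : Fin p → ℝ,
      c * graphNorm p N τ z + 2⁻¹ * ∑ j, (z j - x j) ^ 2 ≤
      c * graphNorm p N τ v + 2⁻¹ * ∑ j, (v j - x j) ^ 2 := by
  set F : (Fin p → ℝ) → ℝ := fun v => c * graphNorm p N τ v + 2⁻¹ * ∑ j, (v j - x j)^2 with hF
  set R : ℝ := Real.sqrt (∑ j, x j ^ 2) + 1 with hR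
  have hR1 : 0 ≤ Real.sqrt (∑ j, x j ^ 2) := Real.sqrt_nonneg _
  clear_value R
  set K : Set (Fin p → ℝ) := Set.pi Set.univ (fun j => Set.Icc (x j - R) (x j + R)) with hK
  have hcomp : IsCompact K := isCompact_univ_pi fun j => isCompact_Icc
  clear_value F
  have hFcont : Continuous F := by
    rw [hF]
    apply Continuous.add
    · exact continuous_const.mul (gn_continuous hτ hN)
    · exact continuous_const.mul (continuous_finset_sum _ fun j _ =>
        ((continuous_apply j).sub continuous_const).pow 2)
  have hxK : x ∈ K := by
    intro j _
    constructor <;> [linarith; linarith]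
  obtain ⟨z, hzK, hz⟩ := hcomp.exists_isMinOn ⟨x, hxK⟩ hFcont.continuousOn
  refine ⟨z, fun v => ?_⟩
  suffices h : F z ≤ F v by simpa only [hF] using h
  by_cases hv : v ∈ K
  · exact hz hv
  · -- v outside K : F v large
    have h0K : (fun _ => (0:ℝ)) ∈ K := by
      intro j _
      have : |x j| ≤ Real.sqrt (∑ j, x j ^ 2) := by
        rw [← Real.sqrt_sq_eq_abs]
        apply Real.sqrt_le_sqrt
        exact Finset.single_le_sum (f := fun j => x j ^ 2) (fun j _ => sq_nonneg _)
          (Finset.mem_univ j)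
      rw [abs_le] at this
      constructor <;> simp <;> linarith
    have hF0 : F (fun _ => (0:ℝ)) = 2⁻¹ * ∑ j, x j ^ 2 := by
      simp only [hF]
      simp only [gn_zero hτ hN, mul_zero, zero_add]
      congr 1
      · congr 1; funext j; ring
    have hFv : 2⁻¹ * R^2 ≤ F v := by
      simp only [hK, Set.mem_pi, Set.mem_univ, forall_true_left, Set.mem_Icc,
        not_forall] at hv
      obtain ⟨j, hj⟩ := hv
      rw [not_and_or, not_le, not_le] at hj
      have hR0 : (0:ℝ) < R := by rw [hR]; linarith
      have hj2 : R ^ 2 ≤ (v j - x j)^2 := by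
        rcases hj with h | h
        · nlinarith
        · nlinarith
      have hsum : (v j - x j)^2 ≤ ∑ j, (v j - x j)^2 :=
        Finset.single_le_sum (f := fun j => (v j - x j)^2) (fun j _ => sq_nonneg _)
          (Finset.mem_univ j)
      have hg : 0 ≤ c * graphNorm p N τ v := mul_nonneg hc.le (gn_nonneg hτ hN v)
      simp only [hF]
      nlinarith
    have hz0 : F z ≤ F (fun _ => (0:ℝ)) := hz h0K
    have hsums : ∑ j, x j ^2 ≤ R^2 := by
      rw [hR]
      nlinarith [Real.sq_sqrt (Finset.sum_nonneg (fun j _ => sq_nonneg (x j)) :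
        (0:ℝ) ≤ ∑ j, x j ^2)]
    have hlt : F (fun _ => (0:ℝ)) ≤ 2⁻¹ * R^2 := by
      rw [hF0]; linarith
    linarith
end mini

/-- the proximal operator of `f = c * ‖·‖_{G,τ}` is
`Prox_f(x) = x − Π_{S_O}(x)`, where `O = { i : ‖x_{N_i}‖₂ > c τ_i }` and
`S_O = { u : ‖u_{N_i}‖₂ ≤ c τ_i for each i ∈ O }`.  Here `π` is the Euclidean
projection of `x` onto `S_O`, expressed via its variational characterization. -/
theorem prox_graphNorm_eq_residual_of_projection (p : ℕ)
    (N : Fin p → Finset (Fin p)) (τ : Fin p → ℝ) (hτ : ∀ i, 0 < τ i)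
    (hN : ∀ i, i ∈ N i) (c : ℝ) (hc : 0 < c) (x : Fin p → ℝ)
    (π : Fin p → ℝ)
    (hπ_mem : ∀ i, c * τ i < l2normOn (N i) x → l2normOn (N i) π ≤ c * τ i)
    (hπ_proj : ∀ u : Fin p → ℝ,
      (∀ i, c * τ i < l2normOn (N i) x → l2normOn (N i) u ≤ c * τ i) →
      ∑ j, (x j - π j) ^ 2 ≤ ∑ j, (x j - u j) ^ 2) :
    ∀ v : Fin p → ℝ,
      c * graphNorm p N τ (x - π) + 2⁻¹ * ∑ j, ((x - π) j - x j) ^ 2 ≤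
      c * graphNorm p N τ v + 2⁻¹ * ∑ j, (v j - x j) ^ 2 := by
  intro v
  -- Step 1 : π satisfies ALL the group constraints (not just the active ones)
  have hπS : ∀ i, l2normOn (N i) π ≤ c * τ i := by
    have hu1 : ∀ j, (clmp (x j) (π j)) ^2 ≤ π j ^2 := fun j => clmp_sq_le_left
    have hu2 : ∀ j, (x j - clmp (x j) (π j))^2 ≤ (x j - π j)^2 := fun j => clmp_dist_le
    have huSO : ∀ i, c*τ i < l2normOn (N i) x →
        l2normOn (N i) (fun j => clmp (x j) (π j)) ≤ c*τ i := by
      intro i hi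
      exact (l2normOn_mono_sq _ hu1).trans (hπ_mem i hi)
    have hle := hπ_proj _ huSO
    have hge : ∑ j, (x j - clmp (x j) (π j))^2 ≤ ∑ j, (x j - π j)^2 :=
      Finset.sum_le_sum fun j _ => hu2 j
    have hsum : ∑ j, (x j - clmp (x j) (π j))^2 = ∑ j, (x j - π j)^2 :=
      le_antisymm hge hle
    have heq : ∀ j, (x j - clmp (x j) (π j))^2 = (x j - π j)^2 := by
      intro j
      by_contra hne
      have hlt : (x j - clmp (x j) (π j))^2 < (x j - π j)^2 := lt_of_le_of_ne (hu2 j) hne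
      have := Finset.sum_lt_sum (fun k (_ : k ∈ Finset.univ) => hu2 k)
        ⟨j, Finset.mem_univ j, hlt⟩
      linarith
    have hsq : ∀ j, π j ^2 ≤ x j ^2 := fun j => clmp_dist_eq (heq j)
    intro i
    rcases lt_or_ge (c * τ i) (l2normOn (N i) x) with h | h
    · exact hπ_mem i h
    · exact (l2normOn_mono_sq _ hsq).trans h
  -- Step 2 : variational inequality for π over S_O
  have hVIπ : ∀ u : Fin p → ℝ,
      (∀ i, c*τ i < l2normOn (N i) x → l2normOn (N i) u ≤ c*τ i) →
      ∑ j, (x j - π j) * (u j - π j) ≤ 0 := by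
    intro u hu
    apply vi_of_min (y := fun j => x j - π j) (d := fun j => u j - π j)
    intro t ht ht1
    have hseg : ∀ i, c*τ i < l2normOn (N i) x →
        l2normOn (N i) (fun j => π j + t * (u j - π j)) ≤ c*τ i := by
      intro i hi
      have hrw : (fun j => π j + t*(u j - π j)) = fun j => ((1-t)*π j) + (t * u j) := by
        funext j; ring
      rw [hrw]
      calc l2normOn (N i) (fun j => ((1-t)*π j) + (t * u j))
          ≤ l2normOn (N i) (fun j => (1-t)*π j) + l2normOn (N i) (fun j => t * u j) :=
            l2normOn_add_le _ _ _
        _ = (1-t) * l2normOn (N i) π + t * l2normOn (N i) u := by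
            rw [l2normOn_smul _ _ (by linarith) π, l2normOn_smul _ _ ht.le u]
        _ ≤ (1-t) * (c*τ i) + t * (c*τ i) := by
            have := hπ_mem i hi
            have := hu i hi
            have h1t : (0:ℝ) ≤ 1 - t := by linarith
            gcongr <;> assumption
        _ = c * τ i := by ring
    have hmin := hπ_proj _ hseg
    have hrw2 : ∀ j, (x j - (π j + t * (u j - π j)))^2
        = ((x j - π j) - t * (u j - π j))^2 := by intro j; ring
    calc ∑ j, (x j - π j)^2 ≤ ∑ j, (x j - (π j + t * (u j - π j)))^2 := hmin
      _ = ∑ j, ((x j - π j) - t * (u j - π j))^2 := Finset.sum_congr rfl fun j _ => hrw2 j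
  -- Step 3 : the prox objective has a global minimizer z
  obtain ⟨z, hz⟩ := exists_global_min hτ hN hc x
  -- (i) : x - z is in the dual ball in the weak (pairing) sense
  have hi1 : ∀ w : Fin p → ℝ, ∑ j, (x j - z j) * w j ≤ c * graphNorm p N τ w := by
    intro w
    refine le_of_forall_small (k := 2⁻¹ * ∑ j, w j ^2) fun t ht ht1 => ?_
    have hmin := hz (fun j => z j + t * w j)
    have hgsub : graphNorm p N τ (fun j => z j + t * w j)
        ≤ graphNorm p N τ z + t * graphNorm p N τ w := by
      have h1 := gn_subadd hτ hN z (fun j => t * w j)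
      have h2 := gn_smul_le hτ hN ht.le w
      linarith
    have hexp : ∑ j, ((z j + t * w j) - x j)^2
        = ∑ j, (z j - x j)^2 + 2*t* ∑ j, ((z j - x j) * w j) + t^2 * ∑ j, w j^2 := by
      rw [show (fun j => ((z j + t * w j) - x j)^2)
          = fun j => (z j - x j)^2 + 2*t*((z j - x j) * w j) + t^2 * w j^2 by
        funext j; ring]
      rw [Finset.sum_add_distrib, Finset.sum_add_distrib, ← Finset.mul_sum, ← Finset.mul_sum]
    have hzw : ∑ j, (x j - z j) * w j = - ∑ j, ((z j - x j) * w j) := by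
      rw [← Finset.sum_neg_distrib]; congr 1; funext j; ring
    rw [hexp] at hmin
    rw [hzw]
    nlinarith [hmin, hgsub, ht, mul_pos ht ht]
  -- (ii) : alignment
  have hi2 : c * graphNorm p N τ z ≤ ∑ j, (x j - z j) * z j := by
    refine le_of_forall_small (k := 2⁻¹ * ∑ j, z j ^2) fun t ht ht1 => ?_
    have hmin := hz (fun j => (1 - t) * z j)
    have hgs := gn_smul_le hτ hN (show (0:ℝ) ≤ 1 - t by linarith) z
    have hexp : ∑ j, ((1 - t) * z j - x j)^2
        = ∑ j, (z j - x j)^2 - 2*t* ∑ j, ((z j - x j) * z j) + t^2 * ∑ j, z j^2 := by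
      rw [show (fun j => ((1 - t) * z j - x j)^2)
          = fun j => (z j - x j)^2 - 2*t*((z j - x j) * z j) + t^2 * z j^2 by
        funext j; ring]
      rw [Finset.sum_add_distrib, Finset.sum_sub_distrib, ← Finset.mul_sum, ← Finset.mul_sum]
    have hzz : ∑ j, (x j - z j) * z j = - ∑ j, ((z j - x j) * z j) := by
      rw [← Finset.sum_neg_distrib]; congr 1; funext j; ring
    rw [hexp] at hmin
    rw [hzz]
    nlinarith [hmin, hgs, ht, mul_pos ht ht, mul_pos hc ht]
  -- (iii) : x - z satisfies all group constraints
  have hzS : ∀ i, l2normOn (N i) (fun j => x j - z j) ≤ c * τ i := by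
    intro i
    have hr0 : 0 ≤ l2normOn (N i) (fun j => x j - z j) := l2normOn_nonneg _ _
    rcases eq_or_lt_of_le hr0 with h0 | h0
    · rw [← h0]; exact mul_nonneg hc.le (hτ i).le
    · set w : Fin p → ℝ := fun j => if j ∈ N i then x j - z j else 0 with hwdef
      have hwsupp : ∀ j, j ∉ N i → w j = 0 := fun j hj => if_neg hj
      have hwsq : ∑ j, (x j - z j) * w j = l2normOn (N i) (fun j => x j - z j) ^ 2 := by
        rw [l2normOn_sq]
        rw [← Finset.sum_subset (Finset.subset_univ (N i))
          (fun j _ hj => by rw [hwdef]; simp [hj])]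
        refine Finset.sum_congr rfl fun j hj => ?_
        rw [hwdef]; simp [hj]; ring
      have hwnorm : l2norm w = l2normOn (N i) (fun j => x j - z j) := by
        rw [l2norm, l2normOn]
        congr 1
        rw [← Finset.sum_subset (Finset.subset_univ (N i))
          (fun j _ hj => by rw [hwdef]; simp [hj])]
        refine Finset.sum_congr rfl fun j hj => ?_
        rw [hwdef]; simp [hj]
      have h1 := hi1 w
      have h2 := gn_single (N := N) hτ i w hwsupp
      rw [hwnorm] at h2
      rw [hwsq] at h1
      nlinarith [h1, h2, hc, hτ i, h0]
  -- variational inequality for x - z over S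
  have hVIz : ∀ w : Fin p → ℝ, (∀ i, l2normOn (N i) w ≤ c * τ i) →
      ∑ j, z j * (w j - (x j - z j)) ≤ 0 := by
    intro w hw
    have h1 : ∑ j, w j * z j ≤ c * graphNorm p N τ z := gn_dual_lower hτ hN hc hw z
    have h3 : ∑ j, z j * (w j - (x j - z j))
        = (∑ j, w j * z j) - ∑ j, (x j - z j) * z j := by
      rw [← Finset.sum_sub_distrib]; congr 1; funext j; ring
    rw [h3]
    linarith [hi2]
  -- Step 4 : π = x - z
  have hπu : ∀ j, π j = x j - z j := by
    have hA := hVIπ (fun j => x j - z j) (fun i _ => hzS i)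
    have hB := hVIz π hπS
    have hsplit : ∑ j, ((x j - z j) - π j)^2
        = (∑ j, (x j - π j) * ((x j - z j) - π j)) + ∑ j, z j * (π j - (x j - z j)) := by
      rw [← Finset.sum_add_distrib]; congr 1; funext j; ring
    have hsum : ∑ j, ((x j - z j) - π j)^2 ≤ 0 := by rw [hsplit]; linarith
    have hall : ∀ j ∈ Finset.univ, ((x j - z j) - π j)^2 = 0 := by
      rw [← Finset.sum_eq_zero_iff_of_nonneg (fun j _ => sq_nonneg _)]
      exact le_antisymm hsum (Finset.sum_nonneg fun j _ => sq_nonneg _)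
    intro j
    have := hall j (Finset.mem_univ j)
    have := pow_eq_zero_iff (n := 2) (by norm_num) |>.mp this
    linarith
  have hxπ : x - π = z := by
    funext j
    have := hπu j
    simp only [Pi.sub_apply]
    linarith
  rw [hxπ]
  exact hz v
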